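/- For all linear forms L₁, …, L₇ ∈ ℂ⁵ (each Lν : Fin 5 → ℂ), the sum over all functions c : {0,1,…,14} → {1,…,7} of the product over b = 1,…,9 of det M(b,c) equals 0, where M(b,c) is the 5×5 complex matrix whose k-th row (k = 1,…,5) is the vector L_{c(B_b(k))}. -/
import Mathlib


/-- The nine ordered blocks, as 5-tuples of elements of `Fin 15`. -/
def B : Fin 9 → Fin 5 → Fin 15 :=
  ![![1, 3, 2, 0, 4], ![6, 0, 5, 8, 7], ![9, 10, 13, 11, 12], ![14, 9, 10, 1, 5],
    ![1, 3, 2, 6, 11], ![12, 4, 5, 8, 7], ![14, 9, 13, 2, 7], ![14, 10, 13, 3, 8],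
    ![6, 11, 0, 12, 4]]

/-- Bitmask adjacency table: bit `j` of `adjMask[i]` is set iff `i ≠ j` and the points
`i` and `j` of `Fin 15` lie in a common block. -/
def adjMask : List ℕ :=
  [6654, 20093, 27355, 27991, 6639, 22483, 6591, 29557, 29945, 31910, 31530, 13919,
   12273, 24460, 10158]

/-- `adjB i j = true` iff `i ≠ j` and `i`, `j` lie in a common block. -/
def adjB (i j : Fin 15) : Bool := (adjMask.getD i.val 0).testBit j.val

/-- Witness table: for adjacent `i j`, a block containing both together with the two
(distinct) positions at which `i` and `j` occur in that block. -/
def W : Fin 15 → Fin 15 → Fin 9 × Fin 5 × Fin 5 :=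
  ![![(0, 0, 0), (0, 3, 0), (0, 3, 2), (0, 3, 1), (0, 3, 4), (1, 1, 2), (1, 1, 0), (1, 1, 4), (1, 1, 3), (0, 0, 0), (0, 0, 0), (8, 2, 1), (8, 2, 3), (0, 0, 0), (0, 0, 0)],
    ![(0, 0, 3), (0, 0, 0), (0, 0, 2), (0, 0, 1), (0, 0, 4), (3, 3, 4), (4, 0, 3), (0, 0, 0), (0, 0, 0), (3, 3, 1), (3, 3, 2), (4, 0, 4), (0, 0, 0), (0, 0, 0), (3, 3, 0)],
    ![(0, 2, 3), (0, 2, 0), (0, 0, 0), (0, 2, 1), (0, 2, 4), (0, 0, 0), (4, 2, 3), (6, 3, 4), (0, 0, 0), (6, 3, 1), (0, 0, 0), (4, 2, 4), (0, 0, 0), (6, 3, 2), (6, 3, 0)],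
    ![(0, 1, 3), (0, 1, 0), (0, 1, 2), (0, 0, 0), (0, 1, 4), (0, 0, 0), (4, 1, 3), (0, 0, 0), (7, 3, 4), (0, 0, 0), (7, 3, 1), (4, 1, 4), (0, 0, 0), (7, 3, 2), (7, 3, 0)],
    ![(0, 4, 3), (0, 4, 0), (0, 4, 2), (0, 4, 1), (0, 0, 0), (5, 1, 2), (8, 4, 0), (5, 1, 4), (5, 1, 3), (0, 0, 0), (0, 0, 0), (8, 4, 1), (5, 1, 0), (0, 0, 0), (0, 0, 0)],
    ![(1, 2, 1), (3, 4, 3), (0, 0, 0), (0, 0, 0), (5, 2, 1), (0, 0, 0), (1, 2, 0), (1, 2, 4), (1, 2, 3), (3, 4, 1), (3, 4, 2), (0, 0, 0), (5, 2, 0), (0, 0, 0), (3, 4, 0)],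
    ![(1, 0, 1), (4, 3, 0), (4, 3, 2), (4, 3, 1), (8, 0, 4), (1, 0, 2), (0, 0, 0), (1, 0, 4), (1, 0, 3), (0, 0, 0), (0, 0, 0), (4, 3, 4), (8, 0, 3), (0, 0, 0), (0, 0, 0)],
    ![(1, 4, 1), (0, 0, 0), (6, 4, 3), (0, 0, 0), (5, 4, 1), (1, 4, 2), (1, 4, 0), (0, 0, 0), (1, 4, 3), (6, 4, 1), (0, 0, 0), (0, 0, 0), (5, 4, 0), (6, 4, 2), (6, 4, 0)],
    ![(1, 3, 1), (0, 0, 0), (0, 0, 0), (7, 4, 3), (5, 3, 1), (1, 3, 2), (1, 3, 0), (1, 3, 4), (0, 0, 0), (0, 0, 0), (7, 4, 1), (0, 0, 0), (5, 3, 0), (7, 4, 2), (7, 4, 0)],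
    ![(0, 0, 0), (3, 1, 3), (6, 1, 3), (0, 0, 0), (0, 0, 0), (3, 1, 4), (0, 0, 0), (6, 1, 4), (0, 0, 0), (0, 0, 0), (2, 0, 1), (2, 0, 3), (2, 0, 4), (2, 0, 2), (3, 1, 0)],
    ![(0, 0, 0), (3, 2, 3), (0, 0, 0), (7, 1, 3), (0, 0, 0), (3, 2, 4), (0, 0, 0), (0, 0, 0), (7, 1, 4), (2, 1, 0), (0, 0, 0), (2, 1, 3), (2, 1, 4), (2, 1, 2), (3, 2, 0)],
    ![(8, 1, 2), (4, 4, 0), (4, 4, 2), (4, 4, 1), (8, 1, 4), (0, 0, 0), (4, 4, 3), (0, 0, 0), (0, 0, 0), (2, 3, 0), (2, 3, 1), (0, 0, 0), (2, 3, 4), (2, 3, 2), (0, 0, 0)],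
    ![(8, 3, 2), (0, 0, 0), (0, 0, 0), (0, 0, 0), (5, 0, 1), (5, 0, 2), (8, 3, 0), (5, 0, 4), (5, 0, 3), (2, 4, 0), (2, 4, 1), (2, 4, 3), (0, 0, 0), (2, 4, 2), (0, 0, 0)],
    ![(0, 0, 0), (0, 0, 0), (6, 2, 3), (7, 2, 3), (0, 0, 0), (0, 0, 0), (0, 0, 0), (6, 2, 4), (7, 2, 4), (2, 2, 0), (2, 2, 1), (2, 2, 3), (2, 2, 4), (0, 0, 0), (6, 2, 0)],
    ![(0, 0, 0), (3, 0, 3), (6, 0, 3), (7, 0, 3), (0, 0, 0), (3, 0, 4), (0, 0, 0), (6, 0, 4), (7, 0, 4), (3, 0, 1), (3, 0, 2), (0, 0, 0), (0, 0, 0), (6, 0, 2), (0, 0, 0)]]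

set_option maxHeartbeats 1000000 in
/-- The witness table is correct. -/
lemma W_spec : ∀ i j : Fin 15, adjB i j = true →
    (W i j).2.1 ≠ (W i j).2.2 ∧ B (W i j).1 (W i j).2.1 = i ∧ B (W i j).1 (W i j).2.2 = j := by
  decide

set_option maxHeartbeats 1000000 in
/-- Among any three distinct points of `Fin 15`, two lie in a common block
(the design has independence number 2). -/
lemma tri : ∀ i j k : Fin 15, i ≠ j → i ≠ k → j ≠ k →
    (adjB i j || (adjB i k || adjB j k)) = true := by
  decide

/-- For all linear forms `L₁, …, L₇ ∈ ℂ⁵`, the sum over all functions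
`c : Fin 15 → Fin 7` of the product over the nine blocks `b` of the determinant
of the 5×5 matrix whose `k`-th row is `L (c (B b k))` equals 0. -/
theorem invariant_vanishes_on_seven_cubes (L : Fin 7 → Fin 5 → ℂ) :
    ∑ c : Fin 15 → Fin 7, ∏ b : Fin 9,
      (Matrix.of fun k j : Fin 5 => L (c (B b k)) j).det = 0 := by
  apply Finset.sum_eq_zero
  intro c _
  -- Pigeonhole: some value `ν` is attained by at least three of the 15 points.
  obtain ⟨ν, -, hν⟩ := Finset.exists_lt_card_fiber_of_mul_lt_card_of_maps_to
    (f := c) (s := (Finset.univ : Finset (Fin 15))) (t := (Finset.univ : Finset (Fin 7)))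
    (fun x _ => Finset.mem_univ (c x)) (n := 2) (by simp)
  rw [Finset.two_lt_card_iff] at hν
  obtain ⟨i, j, k, hi, hj, hk, hij, hik, hjk⟩ := hν
  simp only [Finset.mem_filter, Finset.mem_univ, true_and] at hi hj hk
  -- Two of the three points are adjacent and carry the same value.
  have hpair : ∃ x y : Fin 15, adjB x y = true ∧ c x = c y := by
    have h := tri i j k hij hik hjk
    simp only [Bool.or_eq_true] at h
    rcases h with h | h | h
    · exact ⟨i, j, h, hi.trans hj.symm⟩
    · exact ⟨i, k, h, hi.trans hk.symm⟩
    · exact ⟨j, k, h, hj.trans hk.symm⟩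
  obtain ⟨x, y, hadj, hxy⟩ := hpair
  obtain ⟨hne, hBx, hBy⟩ := W_spec x y hadj
  -- The corresponding block has two equal rows, hence zero determinant.
  refine Finset.prod_eq_zero (Finset.mem_univ (W x y).1) ?_
  refine Matrix.det_zero_of_row_eq hne ?_
  funext z
  simp only [Matrix.of_apply]
  rw [hBx, hBy, hxy]
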